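/- arXiv:2310.14475 — 4 statements merged into one kernel-verified Lean document; each statement's English description precedes it below -/
import Mathlib

section
/- Let n ≥ 1, φ ∈ 𝓛, and β > 1/2. Then there exists T > 0 such that for all t ≥ T one has 0 ≤ (e^{tΔ}φ)(x) < 1 for every x ∈ ℝⁿ and Ψ_β((e^{tΔ}φ)((1−μ)x + μy)) ≥ (1−μ)Ψ_β((e^{tΔ}φ)(x)) + μΨ_β((e^{tΔ}φ)(y)) for all x, y ∈ ℝⁿ and μ ∈ (0,1); that is, e^{tΔ}φ possesses the eventual β-log-concavity property. -/
open MeasureTheory Filter Set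

noncomputable section

/-- Abbreviation for `ℝⁿ`. -/
abbrev Eucl (n : ℕ) := EuclideanSpace ℝ (Fin n)

/-- The heat flow `(e^{tΔ}φ)(x) = (4πt)^{-n/2} ∫ e^{-|x-y|²/(4t)} φ(y) dy`. -/
def heatFlow (n : ℕ) (φ : Eucl n → ℝ) (t : ℝ) (x : Eucl n) : ℝ :=
  (4 * Real.pi * t) ^ (-(n : ℝ) / 2) * ∫ y : Eucl n, Real.exp (-‖x - y‖ ^ 2 / (4 * t)) * φ y

/-- `U_d[φ](x,t) := (4πt)^d (e^{tΔ}φ)(x)`. -/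
def U (n : ℕ) (d : ℝ) (φ : Eucl n → ℝ) (t : ℝ) (x : Eucl n) : ℝ :=
  (4 * Real.pi * t) ^ d * heatFlow n φ t x

/-- The class `𝓛`: nontrivial, nonnegative, bounded measurable functions with
compact support. -/
def memL (n : ℕ) (φ : Eucl n → ℝ) : Prop :=
  Measurable φ ∧ (∀ x, 0 ≤ φ x) ∧ (∃ C, ∀ x, φ x ≤ C) ∧ HasCompactSupport φ ∧
    0 < ∫ y : Eucl n, φ y

/-- The class `𝓛_A` : members of `𝓛` satisfying condition (A). -/
def memLA (n : ℕ) (φ : Eucl n → ℝ) : Prop :=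
  memL n φ ∧
  ∃ C > (0 : ℝ), ∀ k : ℝ, 1 ≤ k → ∀ ξ z : Eucl n, ‖ξ‖ = 1 →
    essSup (fun y => (inner ℝ (y - z) ξ : ℝ)) (volume.restrict {y : Eucl n | 0 < φ y}) = 0 →
    (∫ y : Eucl n, (inner ℝ y ξ : ℝ) ^ 2 * Real.exp (k * (inner ℝ y ξ : ℝ)) * φ (y - z)) ≤
      C * k⁻¹ ^ 2 * ∫ y : Eucl n, Real.exp (k * (inner ℝ y ξ : ℝ)) * φ (y - z)

/-- `f : ℝⁿ → [0,a)` is `F`-concave, where `F : [0,a) → [-∞,∞)` is represented by its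
(real-valued) restriction to `(0,a)` together with the convention `F(0) = -∞`:
the concavity inequality is automatic when `f(x) = 0` or `f(y) = 0`, and when
`f(x) > 0` and `f(y) > 0` it forces `f((1-μ)x+μy) > 0` together with the real
inequality. -/
def FConcaveOn (n : ℕ) (a : ℝ) (F : ℝ → ℝ) (f : Eucl n → ℝ) : Prop :=
  (∀ x, f x ∈ Set.Ico (0 : ℝ) a) ∧
  ∀ x y : Eucl n, ∀ μ : ℝ, μ ∈ Set.Ioo (0 : ℝ) 1 → 0 < f x → 0 < f y →
    0 < f ((1 - μ) • x + μ • y) ∧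
      (1 - μ) * F (f x) + μ * F (f y) ≤ F (f ((1 - μ) • x + μ • y))

/-- `F`-concavity for `a = ∞`, i.e. for `f : ℝⁿ → [0,∞)`. -/
def FConcaveOnInf (n : ℕ) (F : ℝ → ℝ) (f : Eucl n → ℝ) : Prop :=
  (∀ x, 0 ≤ f x) ∧
  ∀ x y : Eucl n, ∀ μ : ℝ, μ ∈ Set.Ioo (0 : ℝ) 1 → 0 < f x → 0 < f y →
    0 < f ((1 - μ) • x + μ • y) ∧
      (1 - μ) * F (f x) + μ * F (f y) ≤ F (f ((1 - μ) • x + μ • y))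

/-- `F` is admissible on `[0,a)` (with `a` finite): continuous and strictly increasing
on `(0,a)`; the value `F(0) = -∞` is built into the notion of `F`-concavity. -/
def Admissible (a : ℝ) (F : ℝ → ℝ) : Prop :=
  ContinuousOn F (Set.Ioo 0 a) ∧ StrictMonoOn F (Set.Ioo 0 a)

/-- `F` is admissible on `[0,∞)`. -/
def AdmissibleInf (F : ℝ → ℝ) : Prop :=
  ContinuousOn F (Set.Ioi 0) ∧ StrictMonoOn F (Set.Ioi 0)

/-- Condition (F_a) : `F` admissible on `[0,a)`, `F ∈ C²((0,a))`, `F' > 0` on `(0,a)`. -/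
def CondFa (a : ℝ) (F : ℝ → ℝ) : Prop :=
  Admissible a F ∧ ContDiffOn ℝ 2 F (Set.Ioo 0 a) ∧ ∀ x ∈ Set.Ioo (0 : ℝ) a, 0 < deriv F x

/-- `𝓕(r) := F(a e^{-r})`. -/
def calF (a : ℝ) (F : ℝ → ℝ) : ℝ → ℝ := fun r => F (a * Real.exp (-r))

/-- `κ_F(r) := -r 𝓕''(r) / 𝓕'(r)`. -/
def kappaF (a : ℝ) (F : ℝ → ℝ) (r : ℝ) : ℝ :=
  -r * deriv (deriv (calF a F)) r / deriv (calF a F) r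

/-- `σ_F(r) := r (κ_F(r) - 1/2)`. -/
def sigmaF (a : ℝ) (F : ℝ → ℝ) (r : ℝ) : ℝ := r * (kappaF a F r - 1 / 2)

/-- `U_d[φ]` possesses the eventual `F`-concavity property. -/
def EventualFConcave (n : ℕ) (a : ℝ) (F : ℝ → ℝ) (d : ℝ) (φ : Eucl n → ℝ) : Prop :=
  ∃ T > (0 : ℝ), ∀ t ≥ T, FConcaveOn n a F (U n d φ t)

/-- `Ψ_β(τ) = -(-log τ)^β` on `(0,1)` (with `Ψ_β(0) = -∞` by convention). -/
def Psi (β : ℝ) : ℝ → ℝ := fun τ => -(-Real.log τ) ^ β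

/-- The function `h(x) = (4π)^{-1/2} ∫_0^∞ e^{-(x-z)²/4} dz`. -/
def hfun : ℝ → ℝ := fun x =>
  (4 * Real.pi) ^ (-(1 : ℝ) / 2) * ∫ z in Set.Ioi (0 : ℝ), Real.exp (-(x - z) ^ 2 / 4)

/-- `H`, the inverse function of `h` on `(0,1)` (with `H(0) = -∞` by convention). -/
def hotH : ℝ → ℝ := Function.invFun hfun

/-- `Φ_α(τ) = (τ^α - 1)/α` on `(0,∞)` (with `Φ_α(0) = -∞` by convention). -/
def PhiAlpha (α : ℝ) : ℝ → ℝ := fun τ => (τ ^ α - 1) / α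

/-!
For `t > 0` write `e^{tΔ}φ = exp (-g)` with `g(p) = (n/2) log (4πt) + ‖p‖²/(4t) - log K(p)` and
`K(p) = ∫ exp (⟪p, y⟫/(2t) - ‖y‖²/(4t)) φ(y) dy`. Then `β`-log-concavity of `e^{tΔ}φ` is convexity
of `g^β`, i.e. `g g'' + (β - 1) g'² ≥ 0` along every line `s ↦ x + s d`.

If `supp φ ⊆ B(0, R)`, the first two derivatives of `log K` along the line are the mean and the
variance of `⟪d, y⟫/(2t)` under a tilted probability measure on `supp φ`, so they are bounded by
`R‖d‖/(2t)` and `(R‖d‖/(2t))²`. Hence `|g'| ≤ ‖d‖ (‖p‖ + R)/(2t)` and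
`g'' ≥ ‖d‖² (2t - R²)/(4t²)`, while `g(p) ≥ (‖p‖ - R)²/(4t) + 1` as soon as `(n/2) log t` is large.
For `R² ≤ δt` these bounds give `g g'' ≥ (1/2 - δ) g'²`, which is enough when `δ ≤ β - 1/2`.
-/

open Real
open scoped InnerProductSpace

section CompactlySupportedWeight

variable {α : Type*} [TopologicalSpace α] [T2Space α] [MeasurableSpace α]
  [OpensMeasurableSpace α] {μ : Measure α} {φ : α → ℝ}

theorem MeasureTheory.Integrable.continuous_mul_of_hasCompactSupport (hφ : Integrable φ μ)
    (hφc : HasCompactSupport φ) {f : α → ℝ} (hf : Continuous f) :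
    Integrable (fun y => f y * φ y) μ :=
  (integrableOn_iff_integrable_of_support_subset
      ((Function.support_mul_subset_right f φ).trans (subset_tsupport φ))).1
    (hφ.integrableOn.continuousOn_mul hf.continuousOn hφc)

theorem integral_mul_pos_of_hasCompactSupport (hφ0 : 0 ≤ φ) (hφc : HasCompactSupport φ)
    (hI : 0 < ∫ y, φ y ∂μ) {f : α → ℝ} (hf : Continuous f) (hfpos : ∀ y, 0 < f y) :
    0 < ∫ y, f y * φ y ∂μ := by
  have hφ : Integrable φ μ := .of_integral_ne_zero hI.ne'
  have hsupp : Function.support (fun y => f y * φ y) = Function.support φ := by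
    ext y
    simp [(hfpos y).ne']
  rw [integral_pos_iff_support_of_nonneg (fun y => mul_nonneg (hfpos y).le (hφ0 y))
    (hφ.continuous_mul_of_hasCompactSupport hφc hf), hsupp]
  rwa [integral_pos_iff_support_of_nonneg hφ0 hφ] at hI

theorem integral_mul_mono_of_le_on_support (hφ : Integrable φ μ) (hφc : HasCompactSupport φ)
    (hφ0 : 0 ≤ φ) {f g : α → ℝ} (hf : Continuous f) (hg : Continuous g)
    (hfg : ∀ y ∈ Function.support φ, f y ≤ g y) :
    ∫ y, f y * φ y ∂μ ≤ ∫ y, g y * φ y ∂μ := by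
  refine integral_mono (hφ.continuous_mul_of_hasCompactSupport hφc hf)
    (hφ.continuous_mul_of_hasCompactSupport hφc hg) fun y => ?_
  by_cases hy : φ y = 0
  · simp [hy]
  · exact mul_le_mul_of_nonneg_right (hfg y hy) (hφ0 y)

theorem hasDerivAt_integral_mul_exp (hφ : Integrable φ μ) (hφc : HasCompactSupport φ)
    {v a w : α → ℝ} (hv : Continuous v) (ha : Continuous a) (hw : Continuous w) (s₀ : ℝ) :
    HasDerivAt (fun s => ∫ y, v y * exp (a y + s * w y) * φ y ∂μ)
      (∫ y, v y * w y * exp (a y + s₀ * w y) * φ y ∂μ) s₀ := by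
  obtain ⟨Mv, hMv⟩ := hφc.isCompact.exists_bound_of_continuousOn hv.continuousOn
  obtain ⟨Ma, hMa⟩ := hφc.isCompact.exists_bound_of_continuousOn ha.continuousOn
  obtain ⟨Mw, hMw⟩ := hφc.isCompact.exists_bound_of_continuousOn hw.continuousOn
  have hint : ∀ {f : α → ℝ}, Continuous f → Integrable (fun y => f y * φ y) μ :=
    hφ.continuous_mul_of_hasCompactSupport hφc
  have hbound : ∀ y, ∀ s ∈ Metric.ball s₀ 1, ‖v y * w y * exp (a y + s * w y) * φ y‖ ≤
      Mv * Mw * exp (Ma + (|s₀| + 1) * Mw) * ‖φ y‖ := by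
    intro y s hs
    by_cases hy : y ∈ tsupport φ
    · have hs' : |s| ≤ |s₀| + 1 := by
        rw [Metric.mem_ball, Real.dist_eq] at hs
        linarith [abs_sub_abs_le_abs_sub s s₀]
      have hexp : exp (a y + s * w y) ≤ exp (Ma + (|s₀| + 1) * Mw) := by
        refine exp_le_exp.2 ?_
        calc a y + s * w y ≤ ‖a y‖ + |s| * ‖w y‖ := by
              rw [Real.norm_eq_abs, Real.norm_eq_abs, ← abs_mul]
              exact add_le_add (le_abs_self _) (le_abs_self _)
          _ ≤ Ma + (|s₀| + 1) * Mw := by gcongr; exacts [hMa y hy, hMw y hy]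
      rw [norm_mul, norm_mul, norm_mul, Real.norm_of_nonneg (exp_pos _).le]
      have hv' : ‖v y‖ ≤ Mv := hMv y hy
      have hw' : ‖w y‖ ≤ Mw := hMw y hy
      have hMv0 : 0 ≤ Mv := (norm_nonneg _).trans hv'
      have hMw0 : 0 ≤ Mw := (norm_nonneg _).trans hw'
      gcongr
    · simp [image_eq_zero_of_notMem_tsupport hy]
  refine (hasDerivAt_integral_of_dominated_loc_of_deriv_le (Metric.ball_mem_nhds s₀ one_pos)
    (Eventually.of_forall fun s => (hint (by fun_prop)).aestronglyMeasurable)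
    (hint (by fun_prop)) (hint (by fun_prop)).aestronglyMeasurable
    (Eventually.of_forall hbound) (hφ.norm.const_mul _)
    (Eventually.of_forall fun y s _ => ?_)).2
  have hexp : HasDerivAt (fun s => exp (a y + s * w y)) (exp (a y + s * w y) * w y) s :=
    ((hasDerivAt_mul_const (w y)).const_add (a y)).exp
  exact ((hexp.const_mul (v y)).mul_const (φ y)).congr_deriv (by ring)

theorem exists_deriv_bounds_log_integral_exp_mul (hφ0 : 0 ≤ φ) (hφc : HasCompactSupport φ)
    (hI : 0 < ∫ y, φ y ∂μ) {a w : α → ℝ} (ha : Continuous a) (hw : Continuous w) {b : ℝ}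
    (hwb : ∀ y ∈ Function.support φ, |w y| ≤ b) :
    ∃ ℓ₁ ℓ₂ : ℝ → ℝ,
      (∀ s, HasDerivAt (fun s => log (∫ y, exp (a y + s * w y) * φ y ∂μ)) (ℓ₁ s) s) ∧
      (∀ s, HasDerivAt ℓ₁ (ℓ₂ s) s) ∧ ∀ s, |ℓ₁ s| ≤ b ∧ ℓ₂ s ≤ b ^ 2 := by
  have hφ : Integrable φ μ := .of_integral_ne_zero hI.ne'
  set κ : ℝ → ℝ := fun s => ∫ y, exp (a y + s * w y) * φ y ∂μ
  set κ₁ : ℝ → ℝ := fun s => ∫ y, w y * exp (a y + s * w y) * φ y ∂μ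
  set κ₂ : ℝ → ℝ := fun s => ∫ y, w y * w y * exp (a y + s * w y) * φ y ∂μ
  have hκ : ∀ s, HasDerivAt κ (κ₁ s) s := fun s => by
    simpa using hasDerivAt_integral_mul_exp (μ := μ) hφ hφc continuous_const ha hw s (v := 1)
  have hκ₁ : ∀ s, HasDerivAt κ₁ (κ₂ s) s := hasDerivAt_integral_mul_exp hφ hφc hw ha hw
  have hκpos : ∀ s, 0 < κ s := fun s =>
    integral_mul_pos_of_hasCompactSupport hφ0 hφc hI (by fun_prop) fun _ => exp_pos _
  have hconst_mul : ∀ c s, ∫ y, c * exp (a y + s * w y) * φ y ∂μ = c * κ s := fun c s => by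
    simp only [mul_assoc, integral_const_mul]
    rfl
  have hmono : ∀ {f g : α → ℝ}, Continuous f → Continuous g →
      (∀ y ∈ Function.support φ, f y ≤ g y) → ∀ s,
      ∫ y, f y * exp (a y + s * w y) * φ y ∂μ ≤ ∫ y, g y * exp (a y + s * w y) * φ y ∂μ :=
    fun hf hg hfg s => integral_mul_mono_of_le_on_support hφ hφc hφ0 (by fun_prop) (by fun_prop)
      fun y hy => mul_le_mul_of_nonneg_right (hfg y hy) (exp_pos _).le
  have hκ₁b : ∀ s, |κ₁ s| ≤ b * κ s := fun s => by
    refine abs_le.2 ⟨?_, ?_⟩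
    · rw [← neg_mul, ← hconst_mul]
      exact hmono continuous_const hw (fun y hy => neg_le_of_abs_le (hwb y hy)) s
    · rw [← hconst_mul]
      exact hmono hw continuous_const (fun y hy => (le_abs_self _).trans (hwb y hy)) s
  have hκ₂b : ∀ s, κ₂ s ≤ b ^ 2 * κ s := fun s => by
    rw [← hconst_mul]
    refine hmono (by fun_prop) continuous_const (fun y hy => ?_) s
    rw [← sq, ← sq_abs]
    exact pow_le_pow_left₀ (abs_nonneg _) (hwb y hy) 2
  refine ⟨fun s => κ₁ s / κ s, fun s => (κ₂ s * κ s - κ₁ s * κ₁ s) / κ s ^ 2,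
    fun s => (hκ s).log (hκpos s).ne', fun s => (hκ₁ s).div (hκ s) (hκpos s).ne',
    fun s => ⟨?_, ?_⟩⟩
  · rw [abs_div, abs_of_pos (hκpos s), div_le_iff₀ (hκpos s)]
    exact hκ₁b s
  · have := hκpos s
    rw [div_le_iff₀ (by positivity)]
    nlinarith [mul_self_nonneg (κ₁ s), hκ₂b s]

end CompactlySupportedWeight

theorem convexOn_rpow_of_hasDerivAt {L L₁ L₂ : ℝ → ℝ} {β : ℝ} (hβ : 0 ≤ β)
    (hL : ∀ s, HasDerivAt L (L₁ s) s) (hL₁ : ∀ s, HasDerivAt L₁ (L₂ s) s)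
    (hpos : ∀ s, 0 < L s) (hkey : ∀ s, 0 ≤ L s * L₂ s + (β - 1) * L₁ s ^ 2) :
    ConvexOn ℝ univ fun s => L s ^ β := by
  have hd₁ : ∀ s, HasDerivAt (fun s => L s ^ β) (β * L s ^ (β - 1) * L₁ s) s := fun s =>
    ((hL s).rpow_const (Or.inl (hpos s).ne')).congr_deriv (by ring)
  have hd₂ : ∀ s, HasDerivAt (fun s => β * L s ^ (β - 1) * L₁ s)
      (β * L s ^ (β - 2) * (L s * L₂ s + (β - 1) * L₁ s ^ 2)) s := fun s => by
    have hpow := (hL s).rpow_const (p := β - 1) (Or.inl (hpos s).ne')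
    have hsplit : L s ^ (β - 1) = L s ^ (β - 2) * L s := by
      rw [← rpow_add_one (hpos s).ne']
      ring_nf
    rw [show β - 1 - 1 = β - 2 by ring] at hpow
    exact ((hpow.const_mul β).mul (hL₁ s)).congr_deriv (by rw [hsplit]; ring)
  refine convexOn_of_hasDerivWithinAt2_nonneg convex_univ
    (continuous_iff_continuousAt.2 fun s => (hd₁ s).continuousAt).continuousOn
    (fun s _ => (hd₁ s).hasDerivWithinAt) (fun s _ => (hd₂ s).hasDerivWithinAt) fun s _ => ?_
  exact mul_nonneg (mul_nonneg hβ (rpow_nonneg (hpos s).le _)) (hkey s)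

theorem half_sub_mul_sq_le_mul {δ t R u D L L₁ L₂ : ℝ} (hδ0 : 0 < δ) (hδ1 : δ ≤ 1 / 2)
    (ht : 0 < t) (hR0 : 0 ≤ R) (hu : 0 ≤ u) (hRt : R ^ 2 ≤ δ * t)
    (hL : (u - R) ^ 2 / (4 * t) + 1 ≤ L) (hL₁ : |L₁| ≤ D * (u + R))
    (hL₂ : D ^ 2 * (2 * t - R ^ 2) ≤ L₂) :
    (1 / 2 - δ) * L₁ ^ 2 ≤ L * L₂ := by
  have hQ : (2 - 4 * δ) * (u + R) ^ 2 ≤ (2 - δ) * ((u - R) ^ 2 + 4 * t) := by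
    -- `δ (rhs - lhs) = (3δu - 4R)²/3 + 10δ²uR + 3δ²R² + 4(2 - δ)(δt - R²) + (8/3 - 4δ)R²`
    have h : 0 ≤ δ * ((2 - δ) * ((u - R) ^ 2 + 4 * t) - (2 - 4 * δ) * (u + R) ^ 2) := by
      nlinarith [sq_nonneg (3 * δ * u - 4 * R), mul_nonneg (sq_nonneg δ) (mul_nonneg hu hR0),
        mul_nonneg (sub_nonneg.2 hRt) (by linarith : (0 : ℝ) ≤ 2 - δ),
        mul_nonneg (sq_nonneg δ) (sq_nonneg R)]
    linarith [(mul_nonneg_iff_of_pos_left hδ0).1 h]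
  have hpoly : (1 / 2 - δ) * (u + R) ^ 2 ≤ ((u - R) ^ 2 / (4 * t) + 1) * (2 * t - R ^ 2) :=
    calc (1 / 2 - δ) * (u + R) ^ 2 ≤ (2 - δ) * ((u - R) ^ 2 + 4 * t) / 4 := by linarith
      _ = ((u - R) ^ 2 / (4 * t) + 1) * ((2 - δ) * t) := by field_simp
      _ ≤ ((u - R) ^ 2 / (4 * t) + 1) * (2 * t - R ^ 2) := by gcongr; nlinarith
  have hsq : L₁ ^ 2 ≤ (D * (u + R)) ^ 2 := by
    rw [← sq_abs]
    exact pow_le_pow_left₀ (abs_nonneg _) hL₁ 2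
  calc (1 / 2 - δ) * L₁ ^ 2 ≤ (1 / 2 - δ) * (D * (u + R)) ^ 2 := by gcongr
    _ = D ^ 2 * ((1 / 2 - δ) * (u + R) ^ 2) := by ring
    _ ≤ D ^ 2 * (((u - R) ^ 2 / (4 * t) + 1) * (2 * t - R ^ 2)) := by gcongr
    _ = ((u - R) ^ 2 / (4 * t) + 1) * (D ^ 2 * (2 * t - R ^ 2)) := by ring
    _ ≤ L * L₂ := by
      refine mul_le_mul hL hL₂ (mul_nonneg (sq_nonneg D) (by nlinarith)) ?_
      exact (by positivity : (0 : ℝ) ≤ (u - R) ^ 2 / (4 * t) + 1).trans hL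

theorem convexOn_univ_of_forall_convexOn_line {E : Type*} [AddCommGroup E] [Module ℝ E]
    {f : E → ℝ} (h : ∀ x d : E, ConvexOn ℝ univ fun s : ℝ => f (x + s • d)) :
    ConvexOn ℝ univ f := by
  refine ⟨convex_univ, fun x _ y _ a b ha hb hab => ?_⟩
  have hline := (h x (y - x)).2 (mem_univ 0) (mem_univ 1) ha hb hab
  obtain rfl : a = 1 - b := by linarith
  have hpt : (1 - b) • x + b • y = x + b • (y - x) := by
    rw [sub_smul, one_smul, smul_sub]
    abel
  rw [hpt]
  simpa using hline

theorem fConcaveOn_psi_exp_neg {n : ℕ} {β : ℝ} {g : Eucl n → ℝ} (hg : ∀ p, 0 < g p)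
    (hconv : ConvexOn ℝ univ fun p => g p ^ β) :
    FConcaveOn n 1 (Psi β) fun p => exp (-g p) := by
  refine ⟨fun p => ⟨(exp_pos _).le, exp_lt_one_iff.2 (neg_lt_zero.2 (hg p))⟩,
    fun x y μ hμ _ _ => ⟨exp_pos _, ?_⟩⟩
  have := hconv.2 (mem_univ x) (mem_univ y) (sub_nonneg.2 hμ.2.le) hμ.1.le (sub_add_cancel 1 μ)
  simp only [Psi, log_exp, neg_neg, smul_eq_mul] at this ⊢
  linarith

def heatTilt (n : ℕ) (φ : Eucl n → ℝ) (t : ℝ) (p : Eucl n) : ℝ :=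
  ∫ y, exp (⟪p, y⟫_ℝ / (2 * t) - ‖y‖ ^ 2 / (4 * t)) * φ y

def heatExponent (n : ℕ) (φ : Eucl n → ℝ) (t : ℝ) (p : Eucl n) : ℝ :=
  n / 2 * log (4 * π * t) + ‖p‖ ^ 2 / (4 * t) - log (heatTilt n φ t p)

section HeatFlow

variable {n : ℕ} {φ : Eucl n → ℝ} {t : ℝ}

theorem heatTilt_pos (hφ0 : 0 ≤ φ) (hφc : HasCompactSupport φ) (hI : 0 < ∫ y, φ y)
    (p : Eucl n) : 0 < heatTilt n φ t p :=
  integral_mul_pos_of_hasCompactSupport hφ0 hφc hI (by fun_prop) fun _ => exp_pos _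

theorem heatFlow_eq_exp_neg_heatExponent (ht : 0 < t) {p : Eucl n}
    (hK : 0 < heatTilt n φ t p) :
    heatFlow n φ t p = exp (-heatExponent n φ t p) := by
  have hkernel : ∀ y, exp (-‖p - y‖ ^ 2 / (4 * t)) * φ y =
      exp (-‖p‖ ^ 2 / (4 * t)) * (exp (⟪p, y⟫_ℝ / (2 * t) - ‖y‖ ^ 2 / (4 * t)) * φ y) := by
    intro y
    rw [← mul_assoc, ← exp_add, norm_sub_sq_real]
    congr 2
    field_simp
    ring
  rw [heatFlow, integral_congr_ae (Eventually.of_forall hkernel), integral_const_mul,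
    ← heatTilt, rpow_def_of_pos (by positivity), heatExponent,
    show -(n / 2 * log (4 * π * t) + ‖p‖ ^ 2 / (4 * t) - log (heatTilt n φ t p)) =
      log (4 * π * t) * (-n / 2) + -‖p‖ ^ 2 / (4 * t) + log (heatTilt n φ t p) by ring,
    exp_add, exp_add, exp_log hK]
  ring

theorem le_heatExponent (hφ0 : 0 ≤ φ) (hφc : HasCompactSupport φ) (hI : 0 < ∫ y, φ y)
    {R : ℝ} (hR : Function.support φ ⊆ Metric.closedBall 0 R) (ht : 0 < t) (p : Eucl n) :
    (‖p‖ - R) ^ 2 / (4 * t) + (n / 2 * log (4 * π * t) - log (∫ y, φ y) - R ^ 2 / (4 * t)) ≤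
      heatExponent n φ t p := by
  have hK : heatTilt n φ t p ≤ exp (‖p‖ * R / (2 * t)) * ∫ y, φ y := by
    rw [← integral_const_mul]
    refine integral_mul_mono_of_le_on_support (.of_integral_ne_zero hI.ne') hφc hφ0
      (by fun_prop) continuous_const fun y hy => exp_le_exp.2 ?_
    have hy : ‖y‖ ≤ R := mem_closedBall_zero_iff.1 (hR hy)
    have hinner : ⟪p, y⟫_ℝ ≤ ‖p‖ * R :=
      (real_inner_le_norm p y).trans (mul_le_mul_of_nonneg_left hy (norm_nonneg p))
    have : ⟪p, y⟫_ℝ / (2 * t) ≤ ‖p‖ * R / (2 * t) := by gcongr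
    have : 0 ≤ ‖y‖ ^ 2 / (4 * t) := by positivity
    linarith
  have hlog : log (heatTilt n φ t p) ≤ ‖p‖ * R / (2 * t) + log (∫ y, φ y) := by
    rw [← log_exp (‖p‖ * R / (2 * t)), ← log_mul (exp_pos _).ne' hI.ne']
    exact log_le_log (heatTilt_pos hφ0 hφc hI p) hK
  have hsq : (‖p‖ - R) ^ 2 / (4 * t) - R ^ 2 / (4 * t) = ‖p‖ ^ 2 / (4 * t) - ‖p‖ * R / (2 * t) := by
    field_simp
    ring
  rw [heatExponent]
  linarith

theorem heatExponent_add_smul (x d : Eucl n) (s : ℝ) :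
    heatExponent n φ t (x + s • d) = n / 2 * log (4 * π * t) + ‖x + s • d‖ ^ 2 / (4 * t) -
      log (∫ y, exp ((⟪x, y⟫_ℝ / (2 * t) - ‖y‖ ^ 2 / (4 * t)) + s * (⟪d, y⟫_ℝ / (2 * t))) *
        φ y) := by
  rw [heatExponent, heatTilt]
  congr 3
  funext y
  rw [inner_add_left, real_inner_smul_left]
  ring_nf

theorem exists_hasDerivAt_heatExponent_add_smul (hφ0 : 0 ≤ φ) (hφc : HasCompactSupport φ)
    (hI : 0 < ∫ y, φ y) {R : ℝ} (hR : Function.support φ ⊆ Metric.closedBall 0 R) (ht : 0 < t)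
    (x d : Eucl n) :
    ∃ L₁ L₂ : ℝ → ℝ, (∀ s, HasDerivAt (fun s => heatExponent n φ t (x + s • d)) (L₁ s) s) ∧
      (∀ s, HasDerivAt L₁ (L₂ s) s) ∧ ∀ s,
        |L₁ s| ≤ ‖d‖ / (2 * t) * (‖x + s • d‖ + R) ∧
        (‖d‖ / (2 * t)) ^ 2 * (2 * t - R ^ 2) ≤ L₂ s := by
  set D := ‖d‖ / (2 * t) with hD
  have hwb : ∀ y ∈ Function.support φ, |⟪d, y⟫_ℝ / (2 * t)| ≤ D * R := fun y hy => by
    rw [abs_div, abs_of_pos (by positivity : (0 : ℝ) < 2 * t), hD, div_mul_eq_mul_div]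
    gcongr
    exact (abs_real_inner_le_norm d y).trans
      (mul_le_mul_of_nonneg_left (mem_closedBall_zero_iff.1 (hR hy)) (norm_nonneg d))
  obtain ⟨ℓ₁, ℓ₂, hℓ, hℓ₁, hℓb⟩ := exists_deriv_bounds_log_integral_exp_mul (μ := volume) hφ0 hφc
    hI (a := fun y => ⟪x, y⟫_ℝ / (2 * t) - ‖y‖ ^ 2 / (4 * t)) (by fun_prop) (by fun_prop) hwb
  have hpath : ∀ s : ℝ, HasDerivAt (fun s : ℝ => x + s • d) d s := fun s => by
    simpa using ((hasDerivAt_id s).smul_const d).const_add x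
  refine ⟨fun s => ⟪x + s • d, d⟫_ℝ / (2 * t) - ℓ₁ s, fun s => ‖d‖ ^ 2 / (2 * t) - ℓ₂ s,
    fun s => ?_, fun s => ?_, fun s => ⟨?_, ?_⟩⟩
  · rw [funext (heatExponent_add_smul x d)]
    exact (((hasDerivAt_const s _).add ((hpath s).norm_sq.div_const (4 * t))).sub
      (hℓ s)).congr_deriv (by field_simp; ring)
  · have hinner := ((hpath s).inner ℝ (hasDerivAt_const s d)).div_const (2 * t)
    simp only [inner_zero_right, zero_add, real_inner_self_eq_norm_sq] at hinner
    exact hinner.sub (hℓ₁ s)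
  · calc _ ≤ |⟪x + s • d, d⟫_ℝ / (2 * t)| + |ℓ₁ s| := abs_sub _ _
      _ ≤ D * ‖x + s • d‖ + D * R := by
        refine add_le_add ?_ (hℓb s).1
        rw [abs_div, abs_of_pos (by positivity : (0 : ℝ) < 2 * t), hD, div_mul_eq_mul_div,
          mul_comm ‖d‖]
        exact div_le_div_of_nonneg_right (abs_real_inner_le_norm _ _) (by positivity)
      _ = _ := by ring
  · have : D ^ 2 * (2 * t - R ^ 2) = ‖d‖ ^ 2 / (2 * t) - (D * R) ^ 2 := by
      rw [hD]
      field_simp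
    linarith [(hℓb s).2]

theorem convexOn_rpow_heatExponent_add_smul (hφ0 : 0 ≤ φ) (hφc : HasCompactSupport φ)
    (hI : 0 < ∫ y, φ y) {R δ β : ℝ} (hR : Function.support φ ⊆ Metric.closedBall 0 R)
    (hR0 : 0 ≤ R) (ht : 0 < t) (hδ0 : 0 < δ) (hδ1 : δ ≤ 1 / 2) (hβ : 1 - β ≤ 1 / 2 - δ)
    (hRt : R ^ 2 ≤ δ * t)
    (hA : 1 ≤ n / 2 * log (4 * π * t) - log (∫ y, φ y) - R ^ 2 / (4 * t)) (x d : Eucl n) :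
    ConvexOn ℝ univ fun s : ℝ => heatExponent n φ t (x + s • d) ^ β := by
  obtain ⟨L₁, L₂, hL, hL₁, hbounds⟩ :=
    exists_hasDerivAt_heatExponent_add_smul hφ0 hφc hI hR ht x d
  have hlow : ∀ s : ℝ, (‖x + s • d‖ - R) ^ 2 / (4 * t) + 1 ≤ heatExponent n φ t (x + s • d) :=
    fun s => by linarith [le_heatExponent hφ0 hφc hI hR ht (x + s • d)]
  refine convexOn_rpow_of_hasDerivAt (by linarith) hL hL₁ (fun s => ?_) fun s => ?_
  · exact lt_of_lt_of_le (by positivity) (hlow s)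
  · have key := half_sub_mul_sq_le_mul hδ0 hδ1 ht hR0 (norm_nonneg _) hRt (hlow s)
      (hbounds s).1 (hbounds s).2
    nlinarith [mul_le_mul_of_nonneg_right hβ (sq_nonneg (L₁ s))]

end HeatFlow

theorem eventually_const_le_half_mul_log_sub {n : ℕ} (hn : 1 ≤ n) (c R : ℝ) :
    ∀ᶠ t in atTop, c ≤ n / 2 * log (4 * π * t) - R ^ 2 / (4 * t) := by
  filter_upwards [eventually_ge_atTop 1,
    tendsto_log_atTop.eventually_ge_atTop (2 * (c + R ^ 2 / 4))] with t ht hlogt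
  have hlog : log t ≤ log (4 * π * t) :=
    log_le_log (by positivity) (by nlinarith [pi_gt_three])
  have hn' : (1 : ℝ) ≤ n := by exact_mod_cast hn
  have hhalf : 1 / 2 * log (4 * π * t) ≤ n / 2 * log (4 * π * t) := by
    gcongr
    exact log_nonneg (by nlinarith [pi_gt_three])
  have hR : R ^ 2 / (4 * t) ≤ R ^ 2 / 4 := by
    gcongr
    linarith
  linarith

/-- For `φ ∈ 𝓛` and `β > 1/2`, the heat flow eventually takes values in
`[0,1)` and is `β`-log-concave (i.e. `Ψ_β`-concave), for all large times. -/
theorem stmt0 (n : ℕ) (hn : 1 ≤ n) (φ : Eucl n → ℝ) (hφ : memL n φ)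
    (β : ℝ) (hβ : 1 / 2 < β) :
    ∃ T > (0 : ℝ), ∀ t ≥ T, FConcaveOn n 1 (Psi β) (heatFlow n φ t) := by
  obtain ⟨-, hφ0, -, hφc, hI⟩ := hφ
  obtain ⟨r, hr⟩ := hφc.isCompact.isBounded.subset_closedBall (0 : Eucl n)
  have hR : Function.support φ ⊆ Metric.closedBall 0 (max r 0) :=
    (subset_tsupport φ).trans (hr.trans (Metric.closedBall_subset_closedBall (le_max_left r 0)))
  set δ := min (β - 1 / 2) (1 / 2)
  have hδ0 : 0 < δ := lt_min (by linarith) one_half_pos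
  have hδβ : 1 - β ≤ 1 / 2 - δ := by linarith [min_le_left (β - 1 / 2) (1 / 2)]
  obtain ⟨T, hT⟩ := eventually_atTop.1 <| (eventually_gt_atTop 0).and <|
    (eventually_ge_atTop (max r 0 ^ 2 / δ)).and <|
      eventually_const_le_half_mul_log_sub hn (1 + log (∫ y, φ y)) (max r 0)
  refine ⟨max T 1, by positivity, fun t ht => ?_⟩
  obtain ⟨ht0, hRt, hA⟩ := hT t (le_of_max_le_left ht)
  rw [div_le_iff₀ hδ0] at hRt
  have hg : ∀ p, 0 < heatExponent n φ t p := fun p => by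
    have := le_heatExponent hφ0 hφc hI hR ht0 p
    have : 0 ≤ (‖p‖ - max r 0) ^ 2 / (4 * t) := by positivity
    linarith
  rw [show heatFlow n φ t = fun p => exp (-heatExponent n φ t p) from
    funext fun p => heatFlow_eq_exp_neg_heatExponent ht0 (heatTilt_pos hφ0 hφc hI p)]
  exact fConcaveOn_psi_exp_neg hg <| convexOn_univ_of_forall_convexOn_line fun x d =>
    convexOn_rpow_heatExponent_add_smul hφ0 hφc hI hR (le_max_right r 0) ht0 hδ0
      (min_le_right _ _) hδβ (by linarith) (by linarith) x d
end
end

section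
/- Let d = n/2 and let F satisfy condition (F_a) with a ∈ (0,∞). If κ_F(r*) > 1/2 for some r* ∈ (0,∞), then there exists φ ∈ 𝓛 with M_φ < a such that U_{n/2}[φ] does not possess the eventual F-concavity property. -/
open MeasureTheory Filter Set

noncomputable section

/-!
Let `φ` be a multiple of the indicator of the unit ball, of mass `M = a e^{-c} < a`. Along the
parabolic rays `x = 2 s σ ξ`, `t = s²`, the function `U_{n/2}[φ]` tends to `M e^{-σ²}` as
`s → ∞`, so eventual `F`-concavity would make the limit `σ ↦ F (M e^{-σ²}) = 𝓕 (σ² + c)` concave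
on `(0, ∞)`. But its second derivative at `σ = √(r* - c)` is `2 𝓕'(r*) + 4 (r* - c) 𝓕''(r*)`,
and since `𝓕' < 0`, the condition `κ_F(r*) > 1/2` says exactly that this is positive for `c = 0`,
hence also for some small `c > 0`.
-/

open Topology

theorem ConcaveOn.of_tendsto {ι E : Type*} [AddCommGroup E] [Module ℝ E] {l : Filter ι}
    [l.NeBot] {s : Set E} {g : ι → E → ℝ} {G : E → ℝ} (hs : Convex ℝ s)
    (hg : ∀ᶠ i in l, ConcaveOn ℝ s (g i)) (hG : ∀ x ∈ s, Tendsto (g · x) l (𝓝 (G x))) :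
    ConcaveOn ℝ s G :=
  ⟨hs, fun x hx y hy μ ν hμ hν hμν =>
    le_of_tendsto_of_tendsto (((hG x hx).const_smul μ).add ((hG y hy).const_smul ν))
      (hG _ (hs hx hy hμ hν hμν)) (hg.mono fun _ hi => hi.2 hx hy hμ hν hμν)⟩

theorem accPt_principal_of_mem_nhds {X : Type*} [TopologicalSpace X] {S : Set X} {x : X}
    [(𝓝[≠] x).NeBot] (hx : S ∈ 𝓝 x) : AccPt x (𝓟 S) := by
  rw [accPt_iff_nhds]
  intro U hU
  exact (Filter.Eventually.and (mem_nhdsWithin_of_mem_nhds (inter_mem hU hx))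
    (self_mem_nhdsWithin (s := {x}ᶜ))).exists

theorem ConcaveOn.nonpos_of_hasDerivAt_deriv {S : Set ℝ} {f : ℝ → ℝ} {f'' x : ℝ}
    (hf : ConcaveOn ℝ S f) (hfd : ∀ y ∈ S, DifferentiableAt ℝ f y) (hx : S ∈ 𝓝 x)
    (hf'' : HasDerivAt (deriv f) f'' x) : f'' ≤ 0 :=
  hf''.hasDerivWithinAt.nonpos_of_antitoneOn (accPt_principal_of_mem_nhds hx)
    (hf.antitoneOn_deriv hfd)

section SquareSubstitution

variable {g : ℝ → ℝ} {c : ℝ}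

theorem hasDerivAt_comp_sq_add (hg : ContDiffOn ℝ 2 g (Ioi 0)) (hc : 0 < c) (σ : ℝ) :
    HasDerivAt (fun τ => g (τ ^ 2 + c)) (deriv g (σ ^ 2 + c) * (2 * σ)) σ := by
  have hgd : DifferentiableAt ℝ g (σ ^ 2 + c) :=
    (hg.differentiableOn two_ne_zero).differentiableAt (Ioi_mem_nhds (by positivity))
  have := hgd.hasDerivAt.comp σ ((hasDerivAt_pow 2 σ).add_const c)
  simpa [Function.comp_def] using this

theorem hasDerivAt_deriv_comp_sq_add (hg : ContDiffOn ℝ 2 g (Ioi 0)) (hc : 0 < c) (σ : ℝ) :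
    HasDerivAt (deriv fun τ => g (τ ^ 2 + c))
      (2 * deriv g (σ ^ 2 + c) + 4 * σ ^ 2 * deriv (deriv g) (σ ^ 2 + c)) σ := by
  have hg' : DifferentiableAt ℝ (deriv g) (σ ^ 2 + c) :=
    ((hg.deriv_of_isOpen (m := 1) isOpen_Ioi (by norm_num)).differentiableOn
      one_ne_zero).differentiableAt (Ioi_mem_nhds (by positivity))
  have hderiv : (deriv fun τ => g (τ ^ 2 + c)) = fun τ => deriv g (τ ^ 2 + c) * (2 * τ) :=
    funext fun τ => (hasDerivAt_comp_sq_add hg hc τ).deriv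
  rw [hderiv]
  refine ((hg'.hasDerivAt.comp σ ((hasDerivAt_pow 2 σ).add_const c)).mul
    ((hasDerivAt_id σ).const_mul 2)).congr_deriv ?_
  simp only [Function.comp_apply, id, Nat.cast_ofNat]
  ring

theorem not_concaveOn_comp_sq_add (hg : ContDiffOn ℝ 2 g (Ioi 0)) (hc : 0 < c) {r : ℝ}
    (hcr : c < r) (hpos : 0 < 2 * deriv g r + 4 * (r - c) * deriv (deriv g) r) :
    ¬ ConcaveOn ℝ (Ioi 0) (fun σ => g (σ ^ 2 + c)) := by
  intro hconc
  have hσ : Real.sqrt (r - c) ^ 2 + c = r := by rw [Real.sq_sqrt (by linarith)]; ring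
  have h'' := hasDerivAt_deriv_comp_sq_add hg hc (Real.sqrt (r - c))
  rw [hσ, Real.sq_sqrt (by linarith)] at h''
  have := hconc.nonpos_of_hasDerivAt_deriv
    (fun σ _ => (hasDerivAt_comp_sq_add hg hc σ).differentiableAt)
    (Ioi_mem_nhds (Real.sqrt_pos.2 (by linarith))) h''
  linarith

end SquareSubstitution

section calF

variable {a : ℝ} {F : ℝ → ℝ}

theorem mapsTo_mul_exp_neg (ha : 0 < a) :
    MapsTo (fun r : ℝ => a * Real.exp (-r)) (Ioi 0) (Ioo 0 a) := fun r (hr : 0 < r) =>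
  ⟨by positivity, mul_lt_of_lt_one_right ha (Real.exp_lt_one_iff.2 (neg_lt_zero.2 hr))⟩

theorem contDiffOn_calF (ha : 0 < a) (hF : CondFa a F) : ContDiffOn ℝ 2 (calF a F) (Ioi 0) :=
  hF.2.1.comp (contDiff_const.mul contDiff_id.neg.exp).contDiffOn (mapsTo_mul_exp_neg ha)

theorem deriv_calF_neg (ha : 0 < a) (hF : CondFa a F) {r : ℝ} (hr : 0 < r) :
    deriv (calF a F) r < 0 := by
  have hr' := mapsTo_mul_exp_neg ha hr
  have hFd : HasDerivAt F (deriv F (a * Real.exp (-r))) (a * Real.exp (-r)) :=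
    ((hF.2.1.differentiableOn two_ne_zero).differentiableAt (isOpen_Ioo.mem_nhds hr')).hasDerivAt
  have hexp : HasDerivAt (fun r : ℝ => a * Real.exp (-r)) (a * (Real.exp (-r) * -1)) r :=
    ((Real.hasDerivAt_exp (-r)).comp r (hasDerivAt_neg' r)).const_mul a
  change deriv (F ∘ fun r => a * Real.exp (-r)) r < 0
  rw [(hFd.comp r hexp).deriv]
  have := hF.2.2 _ hr'
  nlinarith [hr'.1]

theorem exists_not_concaveOn_calF_comp_sq_add (ha : 0 < a) (hF : CondFa a F) {r : ℝ}
    (hr : 0 < r) (hκ : 1 / 2 < kappaF a F r) :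
    ∃ c, 0 < c ∧ ¬ ConcaveOn ℝ (Ioi 0) (fun σ => calF a F (σ ^ 2 + c)) := by
  have hG1 := deriv_calF_neg ha hF hr
  have hκ' : 0 < 2 * deriv (calF a F) r + 4 * r * deriv (deriv (calF a F)) r := by
    rw [kappaF, lt_div_iff_of_neg hG1] at hκ
    linarith
  have hcont : Continuous fun c =>
      2 * deriv (calF a F) r + 4 * (r - c) * deriv (deriv (calF a F)) r := by fun_prop
  have hc : ∀ᶠ c in 𝓝[>] (0 : ℝ), 0 < c := self_mem_nhdsWithin
  have hcr : ∀ᶠ c in 𝓝 (0 : ℝ), c < r := eventually_lt_nhds hr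
  have hq : ∀ᶠ c in 𝓝 (0 : ℝ),
      0 < 2 * deriv (calF a F) r + 4 * (r - c) * deriv (deriv (calF a F)) r :=
    hcont.continuousAt.eventually (eventually_gt_nhds (by simpa using hκ'))
  have hev := (hc.and (eventually_nhdsWithin_of_eventually_nhds hcr)).and
    (eventually_nhdsWithin_of_eventually_nhds hq)
  obtain ⟨c, ⟨hc, hcr⟩, hpos⟩ := hev.exists
  exact ⟨c, hc, not_concaveOn_comp_sq_add (contDiffOn_calF ha hF) hc hcr hpos⟩

end calF

section HeatKernel

variable {n : ℕ} {φ : Eucl n → ℝ} {R t : ℝ}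

theorem U_half_eq (φ : Eucl n → ℝ) (ht : 0 < t) (x : Eucl n) :
    U n ((n : ℝ) / 2) φ t x = ∫ y, Real.exp (-‖x - y‖ ^ 2 / (4 * t)) * φ y := by
  rw [U, heatFlow, ← mul_assoc, ← Real.rpow_add (by positivity),
    show (n : ℝ) / 2 + -(n : ℝ) / 2 = 0 by ring, Real.rpow_zero, one_mul]

theorem integrable_gaussian_mul (hφ : Integrable φ) (ht : 0 < t) (x : Eucl n) :
    Integrable fun y => Real.exp (-‖x - y‖ ^ 2 / (4 * t)) * φ y := by
  refine hφ.bdd_mul (c := 1) (by fun_prop) (Eventually.of_forall fun y => ?_)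
  rw [Real.norm_eq_abs, Real.abs_exp, Real.exp_le_one_iff]
  exact div_nonpos_of_nonpos_of_nonneg (neg_nonpos.2 (by positivity)) (by positivity)

variable (hφ0 : ∀ y, 0 ≤ φ y) (hφ : Integrable φ) (hφR : ∀ y, R < ‖y‖ → φ y = 0)
include hφ0 hφ hφR

theorem integral_mul_exp_le_U_half (ht : 0 < t) (x : Eucl n) :
    (∫ y, φ y) * Real.exp (-(‖x‖ + R) ^ 2 / (4 * t)) ≤ U n ((n : ℝ) / 2) φ t x := by
  rw [U_half_eq φ ht, ← integral_mul_const]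
  refine integral_mono (hφ.mul_const _) (integrable_gaussian_mul hφ ht x) fun y => ?_
  rcases le_or_gt ‖y‖ R with hy | hy
  · have hxy : ‖x - y‖ ≤ ‖x‖ + R := (norm_sub_le x y).trans (by linarith)
    rw [mul_comm]
    gcongr
    exact hφ0 y
  · simp [hφR y hy]

theorem U_half_le_integral_mul_exp (ht : 0 < t) {x : Eucl n} (hx : R ≤ ‖x‖) :
    U n ((n : ℝ) / 2) φ t x ≤ (∫ y, φ y) * Real.exp (-(‖x‖ - R) ^ 2 / (4 * t)) := by
  rw [U_half_eq φ ht, ← integral_mul_const]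
  refine integral_mono (integrable_gaussian_mul hφ ht x) (hφ.mul_const _) fun y => ?_
  rcases le_or_gt ‖y‖ R with hy | hy
  · have hxy : ‖x‖ - R ≤ ‖x - y‖ := by linarith [norm_sub_norm_le x y]
    rw [mul_comm (φ y)]
    gcongr
    exact hφ0 y
  · simp [hφR y hy]

theorem tendsto_U_half_parabolic {ξ : Eucl n} (hξ : ‖ξ‖ = 1) {σ : ℝ} (hσ : 0 < σ) :
    Tendsto (fun s => U n ((n : ℝ) / 2) φ (s ^ 2) ((2 * s * σ) • ξ)) atTop
      (𝓝 ((∫ y, φ y) * Real.exp (-σ ^ 2))) := by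
  have hnorm : ∀ s, 0 < s → ‖(2 * s * σ) • ξ‖ = 2 * s * σ := fun s hs => by
    rw [norm_smul, hξ, mul_one, Real.norm_of_nonneg (by positivity)]
  have hexp : ∀ s, 0 < s → ∀ u, -(2 * s * σ + u) ^ 2 / (4 * s ^ 2) = -(σ + u / (2 * s)) ^ 2 :=
    fun s hs u => by field_simp; ring
  have hg : ∀ {δ : ℝ → ℝ}, Tendsto δ atTop (𝓝 0) → Tendsto
      (fun s => (∫ y, φ y) * Real.exp (-(σ + δ s) ^ 2)) atTop
      (𝓝 ((∫ y, φ y) * Real.exp (-σ ^ 2))) := fun hδ => by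
    have hc : Continuous fun u => (∫ y, φ y) * Real.exp (-(σ + u) ^ 2) := by fun_prop
    simpa [Function.comp_def] using (hc.tendsto 0).comp hδ
  have hR : Tendsto (fun s : ℝ => R / (2 * s)) atTop (𝓝 0) :=
    tendsto_const_nhds.div_atTop (tendsto_id.const_mul_atTop two_pos)
  refine tendsto_of_tendsto_of_tendsto_of_le_of_le' (hg hR) (hg (by simpa using hR.neg)) ?_ ?_
  · filter_upwards [eventually_gt_atTop 0] with s hs
    have := integral_mul_exp_le_U_half hφ0 hφ hφR (t := s ^ 2) (by positivity) ((2 * s * σ) • ξ)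
    rwa [hnorm s hs, hexp s hs] at this
  · filter_upwards [eventually_gt_atTop 0, eventually_ge_atTop (R / (2 * σ))] with s hs hsR
    have hx : R ≤ ‖(2 * s * σ) • ξ‖ := by
      rw [hnorm s hs]
      rw [div_le_iff₀ (by positivity)] at hsR
      linarith
    have := U_half_le_integral_mul_exp hφ0 hφ hφR (t := s ^ 2) (by positivity) hx
    rwa [hnorm s hs, sub_eq_add_neg, hexp s hs, neg_div] at this

end HeatKernel

theorem FConcaveOn.concaveOn_smul {n : ℕ} {a : ℝ} {F : ℝ → ℝ} {f : Eucl n → ℝ}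
    (hf : FConcaveOn n a F f) (hpos : ∀ x, 0 < f x) (v : Eucl n) :
    ConcaveOn ℝ univ fun σ : ℝ => F (f (σ • v)) := by
  refine concaveOn_iff_forall_pos.2 ⟨convex_univ, fun x _ y _ μ ν hμ hν hμν => ?_⟩
  obtain rfl : μ = 1 - ν := by linarith
  have := (hf.2 (x • v) (y • v) ν ⟨hν, by linarith⟩ (hpos _) (hpos _)).2
  simpa only [smul_eq_mul, add_smul, smul_smul] using this

theorem exists_memL_integral_eq (n : ℕ) {M : ℝ} (hM : 0 < M) :
    ∃ φ : Eucl n → ℝ, memL n φ ∧ Integrable φ ∧ (∫ y, φ y) = M ∧ ∀ y, 1 < ‖y‖ → φ y = 0 := by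
  set B := Metric.closedBall (0 : Eucl n) 1
  have hB : 0 < volume.real B := ENNReal.toReal_pos
    (Metric.measure_closedBall_pos volume _ one_pos).ne' measure_closedBall_lt_top.ne
  have hφM : ∫ y, B.indicator (fun _ => M / volume.real B) y = M := by
    rw [integral_indicator measurableSet_closedBall, setIntegral_const, smul_eq_mul,
      mul_div_cancel₀ _ hB.ne']
  refine ⟨B.indicator fun _ => M / volume.real B,
    ⟨?_, fun y => ?_, ⟨M / volume.real B, fun y => ?_⟩, ?_, hφM.symm ▸ hM⟩, ?_, hφM, fun y hy => ?_⟩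
  · exact measurable_const.indicator measurableSet_closedBall
  · exact indicator_nonneg (fun _ _ => by positivity) y
  · exact indicator_le_self' (fun _ _ => by positivity) y
  · exact HasCompactSupport.intro (isCompact_closedBall _ _) fun y hy => indicator_of_notMem hy _
  · exact (integrable_indicator_iff measurableSet_closedBall).2
      (integrableOn_const measure_closedBall_lt_top.ne)
  · exact indicator_of_notMem (by simpa [B] using hy) _

/-- let `d = n/2` and `F` satisfy (F_a) with `a ∈ (0,∞)`. If
`κ_F(r*) > 1/2` for some `r* ∈ (0,∞)`, then there exists `φ ∈ 𝓛` with `M_φ < a` such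
that `U_{n/2}[φ]` does not possess the eventual `F`-concavity property. -/
theorem stmt4 (n : ℕ) (hn : 1 ≤ n) (a : ℝ) (ha : 0 < a) (F : ℝ → ℝ) (hF : CondFa a F)
    (hκ : ∃ rs : ℝ, 0 < rs ∧ 1 / 2 < kappaF a F rs) :
    ∃ φ : Eucl n → ℝ, memL n φ ∧ (∫ y : Eucl n, φ y) < a ∧
      ¬ EventualFConcave n a F ((n : ℝ) / 2) φ := by
  obtain ⟨rs, hrs, hκ⟩ := hκ
  obtain ⟨c, hc, hnotconc⟩ := exists_not_concaveOn_calF_comp_sq_add ha hF hrs hκ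
  have hM : a * Real.exp (-c) ∈ Ioo 0 a := mapsTo_mul_exp_neg ha hc
  obtain ⟨φ, hφL, hφ, hφM, hφR⟩ := exists_memL_integral_eq n hM.1
  refine ⟨φ, hφL, hφM ▸ hM.2, fun ⟨T, _, hT⟩ => hnotconc ?_⟩
  obtain ⟨-, hφ0, -, -, hmass⟩ := hφL
  set ξ : Eucl n := EuclideanSpace.single ⟨0, hn⟩ 1
  have hξ : ‖ξ‖ = 1 := by simp [ξ]
  have hU : ∀ t > 0, ∀ x, 0 < U n ((n : ℝ) / 2) φ t x := fun t ht x =>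
    (mul_pos hmass (Real.exp_pos _)).trans_le (integral_mul_exp_le_U_half hφ0 hφ hφR ht x)
  refine ConcaveOn.of_tendsto (l := atTop)
    (g := fun s σ => F (U n ((n : ℝ) / 2) φ (s ^ 2) ((2 * s * σ) • ξ))) (convex_Ioi 0) ?_ ?_
  · filter_upwards [eventually_gt_atTop 0, eventually_ge_atTop (Real.sqrt T)] with s hs hsT
    have hconc := (hT (s ^ 2) ((Real.sqrt_le_left hs.le).1 hsT)).concaveOn_smul
      (hU _ (by positivity)) ((2 * s) • ξ)
    simpa only [smul_smul, mul_comm _ (2 * s)] using hconc.subset (subset_univ _) (convex_Ioi 0)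
  · intro σ hσ
    have hlim : (∫ y, φ y) * Real.exp (-σ ^ 2) = a * Real.exp (-(σ ^ 2 + c)) := by
      rw [hφM, neg_add, Real.exp_add]
      ring
    have hFc : ContinuousAt F (a * Real.exp (-(σ ^ 2 + c))) := hF.1.1.continuousAt
      (isOpen_Ioo.mem_nhds (mapsTo_mul_exp_neg ha (by positivity : 0 < σ ^ 2 + c)))
    exact hFc.tendsto.comp (hlim ▸ tendsto_U_half_parabolic hφ0 hφ hφR hξ hσ)
end
end

section
/- Let F be admissible on [0,∞). Assume that for every κ > 0 the function [0,∞) ∋ r ↦ F(κ e^{−r²}) is concave. Then F-concavity is weaker than log-concavity in 𝓐([0,∞)), i.e., every log-concave function f : ℝⁿ → [0,∞) is F-concave. -/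
open MeasureTheory Filter Set

noncomputable section

/-!
For large `c` put `rᵢ = √(c - tᵢ)`, so that `e^c e^{-rᵢ²} = e^{tᵢ}`. Concavity of
`r ↦ F(e^c e^{-r²})` at `r₁, r₂` bounds a convex combination of `F(e^{t₁})`, `F(e^{t₂})` by
`F(e^{(1-μ)t₁ + μt₂ + δ})`, where `δ = μ(1-μ)(r₁ - r₂)²` tends to `0` as `c → ∞`. By continuity
`t ↦ F(e^t)` is concave, and a log-concave `f` has `log f` concave, so `F ∘ f = (F ∘ exp) ∘ log f`
is concave as an increasing concave function of a concave one.
-/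

open Real Topology

lemma tendsto_sqrt_sub_sub_sqrt_sub_atTop (a b : ℝ) :
    Tendsto (fun c => √(c - a) - √(c - b)) atTop (𝓝 0) := by
  have hsqrt (d : ℝ) : Tendsto (fun c => √(c - d)) atTop atTop :=
    tendsto_sqrt_atTop.comp (tendsto_atTop_add_const_right _ (-d) tendsto_id)
  refine (tendsto_const_nhds (x := b - a)).div_atTop ((hsqrt a).atTop_add_atTop (hsqrt b))
    |>.congr' ?_
  filter_upwards [eventually_gt_atTop (max a b)] with c hc
  obtain ⟨hac, hbc⟩ := max_lt_iff.1 hc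
  have ha : 0 < √(c - a) := sqrt_pos.2 (sub_pos.2 hac)
  have hb : 0 < √(c - b) := sqrt_pos.2 (sub_pos.2 hbc)
  rw [div_eq_iff (by positivity)]
  linear_combination sq_sqrt (sub_pos.2 hbc).le - sq_sqrt (sub_pos.2 hac).le

lemma add_le_comp_exp_add_of_concaveOn {F : ℝ → ℝ} {c t₁ t₂ a b : ℝ}
    (hconc : ConcaveOn ℝ (Ici 0) (fun r => F (exp c * exp (-r ^ 2))))
    (h₁ : t₁ ≤ c) (h₂ : t₂ ≤ c) (ha : 0 ≤ a) (hb : 0 ≤ b) (hab : a + b = 1) :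
    a * F (exp t₁) + b * F (exp t₂) ≤
      F (exp (a * t₁ + b * t₂ + a * b * (√(c - t₁) - √(c - t₂)) ^ 2)) := by
  have hr₁ : √(c - t₁) ^ 2 = c - t₁ := sq_sqrt (sub_nonneg.2 h₁)
  have hr₂ : √(c - t₂) ^ 2 = c - t₂ := sq_sqrt (sub_nonneg.2 h₂)
  have key := hconc.2 (sqrt_nonneg (c - t₁)) (sqrt_nonneg (c - t₂)) ha hb hab
  simp only [smul_eq_mul, ← exp_add, ← sub_eq_add_neg, hr₁, hr₂, sub_sub_cancel] at key
  have hgap : a * t₁ + b * t₂ + a * b * (√(c - t₁) - √(c - t₂)) ^ 2 =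
      c - (a * √(c - t₁) + b * √(c - t₂)) ^ 2 := by
    linear_combination a * hr₁ + b * hr₂ + (a * √(c - t₁) ^ 2 + b * √(c - t₂) ^ 2 + c) * hab
  rwa [hgap]

theorem concaveOn_comp_exp_of_concaveOn_comp_exp_neg_sq {F : ℝ → ℝ}
    (hF : ContinuousOn F (Ioi 0))
    (hconc : ∀ κ : ℝ, 0 < κ → ConcaveOn ℝ (Ici 0) (fun r => F (κ * exp (-r ^ 2)))) :
    ConcaveOn ℝ univ (fun t => F (exp t)) := by
  refine ⟨convex_univ, fun t₁ _ t₂ _ a b ha hb hab => ?_⟩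
  simp only [smul_eq_mul]
  let δ : ℝ → ℝ := fun c => a * b * (√(c - t₁) - √(c - t₂)) ^ 2
  have hδ : Tendsto δ atTop (𝓝 0) := by
    simpa [δ] using ((tendsto_sqrt_sub_sub_sqrt_sub_atTop t₁ t₂).pow 2).const_mul (a * b)
  have hFexp : ContinuousAt (fun t => F (exp t)) (a * t₁ + b * t₂) :=
    (hF.continuousAt (Ioi_mem_nhds (exp_pos _))).comp continuous_exp.continuousAt
  have hlim : Tendsto (fun c => F (exp (a * t₁ + b * t₂ + δ c))) atTop
      (𝓝 (F (exp (a * t₁ + b * t₂)))) := by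
    have hpt := (tendsto_const_nhds (x := a * t₁ + b * t₂)).add hδ
    rw [add_zero] at hpt
    exact hFexp.tendsto.comp hpt
  refine ge_of_tendsto hlim ?_
  filter_upwards [eventually_ge_atTop (max t₁ t₂)] with c hc
  exact add_le_comp_exp_add_of_concaveOn (hconc _ (exp_pos c))
    (le_max_left _ _ |>.trans hc) (le_max_right _ _ |>.trans hc) ha hb hab

theorem stmt17_general (n : ℕ) (F : ℝ → ℝ) (hF : AdmissibleInf F)
    (hconc : ∀ κ : ℝ, 0 < κ →
      ConcaveOn ℝ (Set.Ici (0 : ℝ)) (fun r : ℝ => F (κ * Real.exp (-r ^ 2)))) :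
    ∀ f : Eucl n → ℝ, FConcaveOnInf n Real.log f → FConcaveOnInf n F f := by
  rintro f ⟨hf_nonneg, hf⟩
  refine ⟨hf_nonneg, fun x y μ hμ hx hy => ?_⟩
  obtain ⟨hz, hlog⟩ := hf x y μ hμ hx hy
  refine ⟨hz, ?_⟩
  have hFexp := (concaveOn_comp_exp_of_concaveOn_comp_exp_neg_sq hF.1 hconc).2
    (mem_univ (log (f x))) (mem_univ (log (f y))) (sub_nonneg.2 hμ.2.le) hμ.1.le
    (sub_add_cancel 1 μ)
  simp only [smul_eq_mul, exp_log hx, exp_log hy] at hFexp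
  exact hFexp.trans (hF.2.monotoneOn (exp_pos _) hz ((le_log_iff_exp_le hz).1 hlog))

/-- let `F` be admissible on `[0,∞)`. If for every `κ > 0` the function
`[0,∞) ∋ r ↦ F(κ e^{-r²})` is concave, then every log-concave `f : ℝⁿ → [0,∞)` is
`F`-concave. -/
theorem stmt17 (n : ℕ) (hn : 1 ≤ n) (F : ℝ → ℝ) (hF : AdmissibleInf F)
    (hconc : ∀ κ : ℝ, 0 < κ →
      ConcaveOn ℝ (Set.Ici (0 : ℝ)) (fun r : ℝ => F (κ * Real.exp (-r ^ 2)))) :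
    ∀ f : Eucl n → ℝ, FConcaveOnInf n Real.log f → FConcaveOnInf n F f :=
  stmt17_general n F hF hconc
end
end

section
/- Assume F satisfies condition (F_a) with a = 1. Let k > 0 and C* ∈ ℝ. Then limsup_{r→∞} (σ_F(r) − k log r) ≤ C* if and only if limsup_{r→∞} (ν_F(r) − 2k log r) ≤ 2C*. -/
open MeasureTheory Filter Set

noncomputable section

/-- `ν_F(r) = (r/κ_F(r))(κ_F(r) - 1/2)` if `κ_F(r) > 0`, and `ν_F(r) = -∞` otherwise
(for `a = 1`). -/
def nuF (F : ℝ → ℝ) (r : ℝ) : EReal :=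
  if 0 < kappaF 1 F r then
    (((r / kappaF 1 F r) * (kappaF 1 F r - 1 / 2) : ℝ) : EReal)
  else ⊥

/-! When `κ_F(r) > 0`, `ν_F = σ_F / κ_F = 2 σ_F - 2 r (κ_F - 1/2)² / κ_F ≤ 2 σ_F`, which gives one
direction. Conversely `ν_F(r) ≤ B < r` forces `κ_F(r) ≤ r / (2 (r - B))`, hence
`σ_F(r) ≤ r B / (2 (r - B)) = B / 2 + B² / (2 (r - B))`; for `B = 2 k log r + C` the error term
tends to `0` because `B² = o(r)`. -/

open Asymptotics

lemma EReal.limsup_le_coe_iff_forall_eventually {α : Type*} {f : Filter α} {u : α → EReal}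
    {c : ℝ} : limsup u f ≤ c ↔ ∀ z : ℝ, c < z → ∀ᶠ a in f, u a ≤ z := by
  refine ⟨fun h z hz ↦ (eventually_lt_of_limsup_lt (h.trans_lt (mod_cast hz))).mono
    fun _ ↦ le_of_lt, fun h ↦ EReal.le_of_forall_lt_iff_le.mp fun z hz ↦ ?_⟩
  exact limsup_le_of_le (by isBoundedDefault) (h z (mod_cast hz))

lemma isLittleO_sq_mul_log_add_const (a c : ℝ) :
    (fun r ↦ (a * Real.log r + c) ^ 2) =o[atTop] id := by
  have hlog : (fun r ↦ a * Real.log r + c) =o[atTop] fun r ↦ r ^ (1 / 2 : ℝ) :=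
    ((isLittleO_log_rpow_atTop (by norm_num : (0 : ℝ) < 1 / 2)).const_mul_left a).add <|
      isLittleO_const_left.mpr <| .inr <|
        tendsto_norm_atTop_atTop.comp (tendsto_rpow_atTop (by norm_num : (0 : ℝ) < 1 / 2))
  refine (hlog.pow two_pos).congr' .rfl ?_
  filter_upwards [eventually_ge_atTop 0] with r hr
  rw [← Real.rpow_natCast, ← Real.rpow_mul hr]
  norm_num

lemma eventually_mul_div_two_mul_sub_le {B : ℝ → ℝ} (hB : (fun r ↦ B r ^ 2) =o[atTop] id)
    {ε : ℝ} (hε : 0 < ε) :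
    ∀ᶠ r in atTop, B r < r ∧ r * B r / (2 * (r - B r)) ≤ B r / 2 + ε := by
  filter_upwards [hB.bound (lt_min hε (by norm_num : (0 : ℝ) < 1 / 4)),
    eventually_ge_atTop 1] with r hBr hr
  rw [Real.norm_eq_abs, Real.norm_eq_abs, abs_sq, id, abs_of_pos (by linarith)] at hBr
  have hB_le : B r ≤ r / 2 := by nlinarith [min_le_right ε (1 / 4)]
  refine ⟨by linarith, ?_⟩
  rw [div_le_iff₀ (by linarith)]
  nlinarith [min_le_left ε (1 / 4)]

lemma div_mul_sub_half_le_two_mul {r κ : ℝ} (hr : 0 ≤ r) (hκ : 0 < κ) :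
    r / κ * (κ - 1 / 2) ≤ 2 * (r * (κ - 1 / 2)) := by
  rw [div_mul_eq_mul_div, div_le_iff₀ hκ]
  nlinarith [mul_nonneg hr (sq_nonneg (κ - 1 / 2))]

lemma mul_sub_half_le_of_div_mul_sub_half_le {r κ B : ℝ} (hr : 0 < r) (hB : B < r)
    (hκ : 0 < κ) (h : r / κ * (κ - 1 / 2) ≤ B) :
    r * (κ - 1 / 2) ≤ r * B / (2 * (r - B)) := by
  rw [div_mul_eq_mul_div, div_le_iff₀ hκ] at h
  rw [le_div_iff₀ (by linarith)]
  nlinarith [mul_le_mul_of_nonneg_left h hr.le]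

lemma nuF_le_two_mul_sigmaF (F : ℝ → ℝ) {r : ℝ} (hr : 0 ≤ r) :
    nuF F r ≤ ((2 * sigmaF 1 F r : ℝ) : EReal) := by
  unfold nuF
  split_ifs with hκ
  · exact EReal.coe_le_coe_iff.mpr (div_mul_sub_half_le_two_mul hr hκ)
  · exact bot_le

lemma sigmaF_le_of_nuF_le {F : ℝ → ℝ} {r B : ℝ} (hr : 0 < r) (hB : B < r)
    (h : nuF F r ≤ (B : EReal)) : sigmaF 1 F r ≤ r * B / (2 * (r - B)) := by
  unfold nuF at h
  split_ifs at h with hκ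
  · exact mul_sub_half_le_of_div_mul_sub_half_le hr hB hκ (EReal.coe_le_coe_iff.mp h)
  · rw [sigmaF, le_div_iff₀ (by linarith)]
    nlinarith [mul_nonpos_of_nonpos_of_nonneg (not_lt.mp hκ) (mul_pos hr (sub_pos.mpr hB)).le]

theorem stmt18_general (F : ℝ → ℝ) (k : ℝ) (Cs : ℝ) :
    Filter.limsup (fun r => ((sigmaF 1 F r - k * Real.log r : ℝ) : EReal)) Filter.atTop
        ≤ ((Cs : ℝ) : EReal) ↔
      Filter.limsup (fun r => nuF F r - ((2 * k * Real.log r : ℝ) : EReal)) Filter.atTop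
        ≤ ((2 * Cs : ℝ) : EReal) := by
  simp only [EReal.limsup_le_coe_iff_forall_eventually, EReal.coe_le_coe_iff]
  constructor
  · intro h z hz
    filter_upwards [h (z / 2) (by linarith), eventually_ge_atTop 0] with r hσ hr
    calc nuF F r - ((2 * k * Real.log r : ℝ) : EReal)
        ≤ ((2 * sigmaF 1 F r : ℝ) : EReal) - ((2 * k * Real.log r : ℝ) : EReal) :=
          EReal.sub_le_sub (nuF_le_two_mul_sigmaF F hr) le_rfl
      _ ≤ z := by exact_mod_cast (by linarith)
  · intro h z hz
    filter_upwards [h (Cs + z) (by linarith), eventually_gt_atTop 0,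
      eventually_mul_div_two_mul_sub_le (isLittleO_sq_mul_log_add_const (2 * k) (Cs + z))
        (half_pos (sub_pos.mpr hz))] with r hν hr ⟨hBr, hbound⟩
    rw [EReal.sub_le_iff_le_add (.inl (EReal.coe_ne_bot _)) (.inl (EReal.coe_ne_top _)),
      ← EReal.coe_add, add_comm] at hν
    linarith [sigmaF_le_of_nuF_le hr hBr hν]

/-- assume `F` satisfies (F_a) with `a = 1`, and let `k > 0`, `C* ∈ ℝ`.
Then `limsup_{r→∞} (σ_F(r) - k log r) ≤ C*` iff
`limsup_{r→∞} (ν_F(r) - 2k log r) ≤ 2C*`. -/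
theorem stmt18 (F : ℝ → ℝ) (hF : CondFa 1 F) (k : ℝ) (hk : 0 < k) (Cs : ℝ) :
    Filter.limsup (fun r => ((sigmaF 1 F r - k * Real.log r : ℝ) : EReal)) Filter.atTop
        ≤ ((Cs : ℝ) : EReal) ↔
      Filter.limsup (fun r => nuF F r - ((2 * k * Real.log r : ℝ) : EReal)) Filter.atTop
        ≤ ((2 * Cs : ℝ) : EReal) :=
  stmt18_general F k Cs
end
end
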